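/- Let d ≥ 1 be an integer, γ ∈ (0, 1/6] a real number, α := √d/γ, and Z a d×d real symmetric matrix with Z ⪰ (1−5γ)·I. Let c ∈ ℝ be such that αZ − cI is positive definite and tr((αZ − cI)^{−2}) = 1. Then c ≥ 0 and 1 ≤ α·λ_min(Z) − c ≤ √d, where λ_min(Z) is the smallest eigenvalue of Z. -/

import Mathlib

/-!
The numbers μᵢ = αλᵢ(Z) − c are the eigenvalues of αZ − cI, so positive definiteness makes them
positive and the trace condition reads ∑ μᵢ⁻² = 1. For the smallest one, μ_min⁻² ≤ 1 and
1 ≤ d μ_min⁻², i.e. 1 ≤ μ_min ≤ √d. Finally c = αλ_min − μ_min ≥ α(1 − 5γ) − √d = √d(1/γ − 6) ≥ 0.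
-/
open Matrix
open scoped ComplexOrder

namespace Matrix

variable {𝕜 n : Type*} [RCLike 𝕜] [Fintype n] [DecidableEq n]

theorem PosDef.pos_of_mem_spectrum {M : Matrix n n 𝕜} (hM : M.PosDef) {x : ℝ}
    (hx : x ∈ spectrum ℝ M) : 0 < x := by
  obtain ⟨i, rfl⟩ := hM.isHermitian.spectrum_real_eq_range_eigenvalues ▸ hx
  exact hM.eigenvalues_pos i

theorem PosSemidef.nonneg_of_mem_spectrum {M : Matrix n n 𝕜} (hM : M.PosSemidef) {x : ℝ}
    (hx : x ∈ spectrum ℝ M) : 0 ≤ x := by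
  obtain ⟨i, rfl⟩ := hM.isHermitian.spectrum_real_eq_range_eigenvalues ▸ hx
  exact hM.eigenvalues_nonneg i

namespace IsHermitian

variable {A : Matrix n n 𝕜}

theorem apply_eigenvalues_mem_spectrum_cfc (hA : A.IsHermitian) (f : ℝ → ℝ) (i : n) :
    f (hA.eigenvalues i) ∈ spectrum ℝ (cfc f A) := by
  rw [cfc_map_spectrum f A (hf := A.finite_real_spectrum.continuousOn f)]
  exact ⟨_, hA.eigenvalues_mem_spectrum_real i, rfl⟩

theorem trace_cfc (hA : A.IsHermitian) (f : ℝ → ℝ) :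
    (cfc f A).trace = ∑ i, (f (hA.eigenvalues i) : 𝕜) := by
  rw [hA.cfc_eq, IsHermitian.cfc, Unitary.conjStarAlgAut_apply, trace_mul_cycle,
    Unitary.coe_star_mul_self, one_mul, trace_diagonal]
  rfl

theorem smul_sub_smul_one_eq_cfc (hA : A.IsHermitian) (α c : ℝ) :
    α • A - c • (1 : Matrix n n 𝕜) = cfc (fun x => α * x - c) A := by
  rw [cfc_sub .., cfc_const_mul .., cfc_id' .., cfc_const .., Algebra.algebraMap_eq_smul_one]

theorem smul_eigenvalues_sub_pos (hA : A.IsHermitian) {α c : ℝ}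
    (hM : (α • A - c • (1 : Matrix n n 𝕜)).PosDef) (i : n) :
    0 < α * hA.eigenvalues i - c :=
  hM.pos_of_mem_spectrum <|
    hA.smul_sub_smul_one_eq_cfc α c ▸ hA.apply_eigenvalues_mem_spectrum_cfc _ i

theorem le_eigenvalues (hA : A.IsHermitian) {a : ℝ}
    (hM : (A - a • (1 : Matrix n n 𝕜)).PosSemidef) (i : n) :
    a ≤ hA.eigenvalues i := by
  rw [← one_smul ℝ A, hA.smul_sub_smul_one_eq_cfc] at hM
  simpa using hM.nonneg_of_mem_spectrum (hA.apply_eigenvalues_mem_spectrum_cfc _ i)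

theorem trace_inv_sq_smul_sub_smul_one (hA : A.IsHermitian) {α c : ℝ}
    (h : ∀ i, α * hA.eigenvalues i - c ≠ 0) :
    ((α • A - c • (1 : Matrix n n 𝕜))⁻¹ ^ 2).trace =
      ∑ i, (((α * hA.eigenvalues i - c)⁻¹ ^ 2 : ℝ) : 𝕜) := by
  have hspec : ∀ x ∈ spectrum ℝ A, α * x - c ≠ 0 := by
    rintro x hx
    obtain ⟨i, rfl⟩ := hA.spectrum_real_eq_range_eigenvalues ▸ hx
    exact h i
  rw [hA.smul_sub_smul_one_eq_cfc, nonsing_inv_eq_ringInverse, ← cfc_inv _ _ hspec,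
    ← cfc_pow .., hA.trace_cfc]

end IsHermitian

end Matrix

section

variable {ι : Type*} [Fintype ι] {μ : ι → ℝ}

theorem one_le_of_sum_inv_sq_eq_one (h : ∑ i, (μ i)⁻¹ ^ 2 = 1) {j : ι} (hj : 0 < μ j) :
    1 ≤ μ j := by
  have hj_le : (μ j)⁻¹ ^ 2 ≤ 1 :=
    h ▸ Finset.single_le_sum (f := fun i => (μ i)⁻¹ ^ 2) (fun i _ => sq_nonneg _)
      (Finset.mem_univ j)
  rw [pow_le_one_iff_of_nonneg (inv_nonneg.2 hj.le) two_ne_zero, inv_le_one₀ hj] at hj_le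
  exact hj_le

theorem le_sqrt_card_of_sum_inv_sq_eq_one (h : ∑ i, (μ i)⁻¹ ^ 2 = 1) {j : ι} (hj : 0 < μ j)
    (hmin : ∀ i, μ j ≤ μ i) : μ j ≤ √(Fintype.card ι) := by
  have hsum_le : 1 ≤ Fintype.card ι / μ j ^ 2 :=
    calc (1 : ℝ) = ∑ i, (μ i)⁻¹ ^ 2 := h.symm
      _ ≤ ∑ _i : ι, (μ j)⁻¹ ^ 2 := Finset.sum_le_sum fun i _ => by
          gcongr
          exacts [inv_nonneg.2 (hj.trans_le (hmin i)).le, hmin i]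
      _ = Fintype.card ι / μ j ^ 2 := by simp [div_eq_mul_inv]
  rw [Real.le_sqrt hj.le (Nat.cast_nonneg _)]
  rwa [one_le_div₀ (by positivity)] at hsum_le

end

theorem stmt6_general {d : ℕ} (γ : ℝ) (hγ0 : 0 < γ) (hγ : γ ≤ 1 / 6)
    (Z : Matrix (Fin d) (Fin d) ℝ) (hZh : Z.IsHermitian)
    (hZpsd : (Z - (1 - 5 * γ) • (1 : Matrix (Fin d) (Fin d) ℝ)).PosSemidef)
    (c : ℝ)
    (hc : ((Real.sqrt d / γ) • Z - c • (1 : Matrix (Fin d) (Fin d) ℝ)).PosDef)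
    (htr : ((((Real.sqrt d / γ) • Z - c • (1 : Matrix (Fin d) (Fin d) ℝ))⁻¹) ^ 2).trace = 1) :
    0 ≤ c ∧
    1 ≤ (Real.sqrt d / γ) * (⨅ i, hZh.eigenvalues i) - c ∧
    (Real.sqrt d / γ) * (⨅ i, hZh.eigenvalues i) - c ≤ Real.sqrt d := by
  set α := √d / γ
  set μ : Fin d → ℝ := fun i => α * hZh.eigenvalues i - c
  have hμ : ∀ i, 0 < μ i := hZh.smul_eigenvalues_sub_pos hc
  have hsum : ∑ i, (μ i)⁻¹ ^ 2 = 1 := by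
    rw [hZh.trace_inv_sq_smul_sub_smul_one fun i => (hμ i).ne'] at htr
    simpa only [RCLike.ofReal_real_eq_id, id] using htr
  have : Nonempty (Fin d) :=
    Finset.univ_nonempty_iff.mp (Finset.nonempty_of_sum_ne_zero (hsum ▸ one_ne_zero))
  obtain ⟨j, hj⟩ := exists_eq_ciInf_of_finite (f := hZh.eigenvalues)
  have hα : 0 ≤ α := by positivity
  have hmin : ∀ i, μ j ≤ μ i := fun i => by
    have hle : hZh.eigenvalues j ≤ hZh.eigenvalues i :=
      hj ▸ ciInf_le (Finite.bddBelow_range hZh.eigenvalues) i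
    simp only [μ]
    gcongr
  have hup : μ j ≤ √d := by
    simpa using le_sqrt_card_of_sum_inv_sq_eq_one hsum (hμ j) hmin
  rw [← hj]
  refine ⟨?_, one_le_of_sum_inv_sq_eq_one hsum (hμ j), hup⟩
  have hγ6 : 6 ≤ 1 / γ := by rw [le_div_iff₀ hγ0]; linarith
  calc 0 ≤ √d * (1 / γ - 6) := mul_nonneg (Real.sqrt_nonneg _) (by linarith)
    _ = α * (1 - 5 * γ) - √d := by simp only [α]; field_simp; ring
    _ ≤ α * hZh.eigenvalues j - μ j := by
        gcongr
        exact hZh.le_eigenvalues hZpsd j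
    _ = c := by simp [μ]

theorem stmt6 {d : ℕ} (hd : 1 ≤ d) (γ : ℝ) (hγ0 : 0 < γ) (hγ : γ ≤ 1 / 6)
    (Z : Matrix (Fin d) (Fin d) ℝ) (hZh : Z.IsHermitian)
    (hZpsd : (Z - (1 - 5 * γ) • (1 : Matrix (Fin d) (Fin d) ℝ)).PosSemidef)
    (c : ℝ)
    (hc : ((Real.sqrt d / γ) • Z - c • (1 : Matrix (Fin d) (Fin d) ℝ)).PosDef)
    (htr : ((((Real.sqrt d / γ) • Z - c • (1 : Matrix (Fin d) (Fin d) ℝ))⁻¹) ^ 2).trace = 1) :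
    0 ≤ c ∧
    1 ≤ (Real.sqrt d / γ) * (⨅ i, hZh.eigenvalues i) - c ∧
    (Real.sqrt d / γ) * (⨅ i, hZh.eigenvalues i) - c ≤ Real.sqrt d :=
  stmt6_general γ hγ0 hγ Z hZh hZpsd c hc htr
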